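/- arXiv:1903.06771 — 6 statements merged into one kernel-verified Lean document; each statement's English description precedes it below -/
import Mathlib

section
/- Let M ≥ 2 be an integer. Let X, X₂, …, X_M be identically distributed random elements of a measurable space 𝒳, let Y be a random element of a measurable space 𝒴 jointly distributed with X, and assume that X₂, …, X_M are mutually independent, each distributed as X, and that the vector (X₂,…,X_M) is independent of the pair (X, Y). Let q : 𝒳 × 𝒴 → [0,∞) be measurable and define g(x,y) = P[q(X̄, y) ≥ q(x, y)], where X̄ is a random element with the same law as X. Then P[∃ j ∈ {2,…,M} : q(X_j, Y) ≥ q(X, Y)] ≤ E[min{1, (M−1)·g(X,Y)}]. -/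
open MeasureTheory ProbabilityTheory
open scoped ENNReal

/-!
Since the competing codewords are independent of `(X, Y)`, the error probability is the average
over `(X, Y) = (x, y)` of the probability that some competing codeword beats `x` at output `y`
(Fubini on the product of the two laws). For fixed `(x, y)` the union bound over the `M - 1`
codewords, each distributed as `X`, bounds this by `(M - 1) g(x, y)`, and it is at most `1`.
-/

theorem ProbabilityTheory.IndepFun.measure_prodMk_mem_eq_lintegral {Ω α β : Type*}
    [MeasurableSpace Ω] [MeasurableSpace α] [MeasurableSpace β]
    {P : Measure Ω} [IsFiniteMeasure P] {W : Ω → α} {Z : Ω → β}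
    (hWZ : IndepFun W Z P) (hW : Measurable W) (hZ : Measurable Z)
    {S : Set (α × β)} (hS : MeasurableSet S) :
    P {ω | (W ω, Z ω) ∈ S} = ∫⁻ ω, P {ω' | (W ω, Z ω') ∈ S} ∂P := by
  have hprod : P.map (fun ω => (W ω, Z ω)) = (P.map W).prod (P.map Z) :=
    (indepFun_iff_map_prod_eq_prod_map_map hW.aemeasurable hZ.aemeasurable).mp hWZ
  calc P {ω | (W ω, Z ω) ∈ S}
      = P.map (fun ω => (W ω, Z ω)) S := (Measure.map_apply (hW.prodMk hZ) hS).symm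
    _ = ∫⁻ w, P.map Z (Prod.mk w ⁻¹' S) ∂P.map W := by rw [hprod, Measure.prod_apply hS]
    _ = ∫⁻ ω, P.map Z (Prod.mk (W ω) ⁻¹' S) ∂P :=
        lintegral_map (measurable_measure_prodMk_left hS) hW
    _ = ∫⁻ ω, P {ω' | (W ω, Z ω') ∈ S} ∂P := by
        congr! 2 with ω
        exact Measure.map_apply hZ (measurable_prodMk_left hS)

theorem measure_exists_mem_le_card_mul {Ω α ι : Type*} [MeasurableSpace Ω] [MeasurableSpace α]
    [Fintype ι] {P : Measure Ω} {ν : Measure α} {C : ι → Ω → α}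
    (hC : ∀ j, Measurable (C j)) (hident : ∀ j, P.map (C j) = ν)
    {s : Set α} (hs : MeasurableSet s) :
    P {ω | ∃ j, C j ω ∈ s} ≤ Fintype.card ι * ν s := by
  calc P {ω | ∃ j, C j ω ∈ s}
      = P (⋃ j, C j ⁻¹' s) := by congr 1; ext; simp
    _ ≤ ∑ j, P (C j ⁻¹' s) := measure_iUnion_fintype_le P _
    _ = ∑ _j : ι, ν s := by
        congr! 1 with j
        rw [← hident j, Measure.map_apply (hC j) hs]
    _ = Fintype.card ι * ν s := by simp

theorem rcu_bound_general
    {Ω 𝒳 𝒴 : Type*} [MeasurableSpace Ω] [MeasurableSpace 𝒳] [MeasurableSpace 𝒴]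
    (P : Measure Ω) [IsProbabilityMeasure P]
    (M : ℕ)
    (X : Ω → 𝒳) (Y : Ω → 𝒴) (C : Fin (M - 1) → Ω → 𝒳)
    (hX : Measurable X) (hY : Measurable Y) (hC : ∀ j, Measurable (C j))
    (hident : ∀ j, Measure.map (C j) P = Measure.map X P)
    (hCXY : IndepFun (fun ω => fun j => C j ω) (fun ω => (X ω, Y ω)) P)
    (q : 𝒳 × 𝒴 → ℝ) (hq : Measurable q)
    (g : 𝒳 → 𝒴 → ℝ≥0∞)
    (hg : ∀ x y, g x y = (Measure.map X P) {x' | q (x, y) ≤ q (x', y)}) :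
    P {ω | ∃ j, q (X ω, Y ω) ≤ q (C j ω, Y ω)} ≤
      ∫⁻ ω, min 1 ((M - 1 : ℕ) * g (X ω) (Y ω)) ∂P := by
  have hS : MeasurableSet {p : (𝒳 × 𝒴) × (Fin (M - 1) → 𝒳) | ∃ j, q p.1 ≤ q (p.2 j, p.1.2)} := by
    simp only [Set.ofPred_exists]
    exact .iUnion fun j => measurableSet_le (by fun_prop) (by fun_prop)
  have hsection (x : 𝒳) (y : 𝒴) : MeasurableSet {x' | q (x, y) ≤ q (x', y)} :=
    measurableSet_le (by fun_prop) (by fun_prop)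
  calc P {ω | ∃ j, q (X ω, Y ω) ≤ q (C j ω, Y ω)}
      = ∫⁻ ω, P {ω' | ∃ j, q (X ω, Y ω) ≤ q (C j ω', Y ω)} ∂P :=
        hCXY.symm.measure_prodMk_mem_eq_lintegral (hX.prodMk hY) (measurable_pi_lambda _ hC) hS
    _ ≤ ∫⁻ ω, min 1 ((M - 1 : ℕ) * g (X ω) (Y ω)) ∂P := by
        refine lintegral_mono fun ω => le_min prob_le_one ?_
        simpa [hg] using measure_exists_mem_le_card_mul hC hident (hsection (X ω) (Y ω))

/-- **Random-coding union (RCU) bound.**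
A codebook of `M` i.i.d. codewords is used: `X` is the transmitted codeword, `Y` the channel
output, and `C j`, `j = 1, …, M-1`, are the `M - 1` competing codewords `X₂, …, X_M`, each
distributed as `X`, mutually independent, and (as a vector) independent of the pair `(X, Y)`.
With `g x y = P[q(X̄, y) ≥ q(x, y)]` (where `X̄` has the law of `X`), the probability that some
competing codeword achieves a metric at least as large as that of `X` is bounded by
`E[min{1, (M−1)·g(X,Y)}]`. -/
theorem rcu_bound
    {Ω 𝒳 𝒴 : Type*} [MeasurableSpace Ω] [MeasurableSpace 𝒳] [MeasurableSpace 𝒴]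
    (P : Measure Ω) [IsProbabilityMeasure P]
    (M : ℕ) (hM : 2 ≤ M)
    (X : Ω → 𝒳) (Y : Ω → 𝒴) (C : Fin (M - 1) → Ω → 𝒳)
    (hX : Measurable X) (hY : Measurable Y) (hC : ∀ j, Measurable (C j))
    (hident : ∀ j, Measure.map (C j) P = Measure.map X P)
    (hCindep : iIndepFun C P)
    (hCXY : IndepFun (fun ω => fun j => C j ω) (fun ω => (X ω, Y ω)) P)
    (q : 𝒳 × 𝒴 → ℝ) (hq : Measurable q) (hqnonneg : ∀ p, 0 ≤ q p)
    (g : 𝒳 → 𝒴 → ℝ≥0∞)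
    (hg : ∀ x y, g x y = (Measure.map X P) {x' | q (x, y) ≤ q (x', y)}) :
    P {ω | ∃ j, q (X ω, Y ω) ≤ q (C j ω, Y ω)} ≤
      ∫⁻ ω, min 1 ((M - 1 : ℕ) * g (X ω) (Y ω)) ∂P :=
  rcu_bound_general P M X Y C hX hY hC hident hCXY q hq g hg
end

section
/- Let M ≥ 2 be an integer, let (X,Y) be a pair of random elements of 𝒳 × 𝒴, let X̄ be independent of (X,Y) with the same law as X, let q : 𝒳 × 𝒴 → (0,∞) be measurable, and let α > 0. Assume 0 < E[q(X̄,y)^α] < ∞ for every y, define i_α(x,y) = log( q(x,y)^α / E[q(X̄,y)^α] ) and g(x,y) = P[q(X̄, y) ≥ q(x, y)]. Then E[ min{1, (M−1)·g(X,Y)} ] ≤ E[ exp( −[ i_α(X,Y) − log(M−1) ]⁺ ) ], where [a]⁺ = max{0, a}. -/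
open MeasureTheory
open scoped ENNReal

/-!
Pointwise in `(x, y)`: since `t ↦ t ^ α` is increasing, `g x y` is the probability that
`q(X̄,y)^α ≥ q(x,y)^α`, which Markov's inequality bounds by `E[q(X̄,y)^α] / q(x,y)^α`.
Multiplying by `M - 1` and truncating at `1` gives exactly `exp(−[i_α(x,y) − log(M−1)]⁺)`.
-/

theorem measure_le_le_ofReal_integral_div {α : Type*} [MeasurableSpace α] {μ : Measure α}
    {f : α → ℝ} (hf_nonneg : 0 ≤ᵐ[μ] f) (hf : Integrable f μ) {a : ℝ} (ha : 0 < a) :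
    μ {x | a ≤ f x} ≤ ENNReal.ofReal ((∫ x, f x ∂μ) / a) :=
  calc μ {x | a ≤ f x} ≤ μ {x | ENNReal.ofReal a ≤ ENNReal.ofReal (f x)} :=
        measure_mono fun _ hx => ENNReal.ofReal_le_ofReal hx
    _ ≤ (∫⁻ x, ENNReal.ofReal (f x) ∂μ) / ENNReal.ofReal a :=
        meas_ge_le_lintegral_div hf.aemeasurable.ennreal_ofReal
          (ENNReal.ofReal_pos.2 ha).ne' ENNReal.ofReal_ne_top
    _ = ENNReal.ofReal ((∫ x, f x ∂μ) / a) := by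
        rw [← ofReal_integral_eq_lintegral_ofReal hf hf_nonneg, ENNReal.ofReal_div_of_pos ha]

theorem Real.exp_neg_max_zero_log_sub_log {u c : ℝ} (hu : 0 < u) (hc : 0 < c) :
    Real.exp (-(max 0 (Real.log u - Real.log c))) = min 1 (c / u) := by
  rw [← min_neg_neg, neg_zero, Real.exp_monotone.map_min, Real.exp_zero, neg_sub,
    Real.exp_sub, Real.exp_log hc, Real.exp_log hu]

theorem rcus_relaxation_general
    {Ω 𝒳 𝒴 : Type*} [MeasurableSpace Ω] [MeasurableSpace 𝒳] [MeasurableSpace 𝒴]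
    (P : Measure Ω)
    (M : ℕ) (hM : 2 ≤ M)
    (X : Ω → 𝒳) (Y : Ω → 𝒴)
    (q : 𝒳 × 𝒴 → ℝ) (hqpos : ∀ p, 0 < q p)
    (α : ℝ) (hα : 0 < α)
    (hint : ∀ y, Integrable (fun x' => q (x', y) ^ α) (Measure.map X P))
    (hpos : ∀ y, 0 < ∫ x', q (x', y) ^ α ∂(Measure.map X P))
    (g : 𝒳 → 𝒴 → ℝ≥0∞)
    (hg : ∀ x y, g x y = (Measure.map X P) {x' | q (x, y) ≤ q (x', y)})
    (iα : 𝒳 → 𝒴 → ℝ)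
    (hiα : ∀ x y,
      iα x y = Real.log (q (x, y) ^ α / ∫ x', q (x', y) ^ α ∂(Measure.map X P))) :
    ∫⁻ ω, min 1 ((M - 1 : ℕ) * g (X ω) (Y ω)) ∂P ≤
      ∫⁻ ω, ENNReal.ofReal
        (Real.exp (-(max 0 (iα (X ω) (Y ω) - Real.log ((M : ℝ) - 1))))) ∂P := by
  refine lintegral_mono fun ω => ?_
  set x := X ω
  set y := Y ω
  set A := q (x, y) ^ α
  set B := ∫ x', q (x', y) ^ α ∂(Measure.map X P)
  have hA : 0 < A := Real.rpow_pos_of_pos (hqpos _) α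
  have hc : (0 : ℝ) < (M : ℝ) - 1 := by
    have : (2 : ℝ) ≤ M := by exact_mod_cast hM
    linarith
  have hcast : ((M - 1 : ℕ) : ℝ≥0∞) = ENNReal.ofReal ((M : ℝ) - 1) := by
    rw [← ENNReal.ofReal_natCast, Nat.cast_sub (by omega), Nat.cast_one]
  have hmarkov : g x y ≤ ENNReal.ofReal (B / A) := by
    have hset : {x' | q (x, y) ≤ q (x', y)} = {x' | A ≤ q (x', y) ^ α} := by
      ext x'
      exact (Real.rpow_le_rpow_iff (hqpos _).le (hqpos _).le hα).symm
    rw [hg, hset]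
    exact measure_le_le_ofReal_integral_div
      (ae_of_all _ fun x' => (Real.rpow_pos_of_pos (hqpos _) α).le) (hint y) hA
  rw [hiα, Real.exp_neg_max_zero_log_sub_log (div_pos hA (hpos y)) hc, div_div_eq_mul_div,
    mul_div_assoc, ENNReal.ofReal_min, ENNReal.ofReal_one, ENNReal.ofReal_mul hc.le, ← hcast]
  gcongr

/-- **Relaxation step from the RCU bound to the RCUs bound with parameter `α`.**
`(X, Y)` is the transmitted codeword and channel output, `X̄` is an independent copy of `X`
(encoded through its law `Measure.map X P`), `q` is a positive measurable decoding metric,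
and `α > 0`.  Assuming `0 < E[q(X̄,y)^α] < ∞` for every `y` (encoded by integrability and
positivity of the integral), with
`i_α(x,y) = log(q(x,y)^α / E[q(X̄,y)^α])` and `g(x,y) = P[q(X̄,y) ≥ q(x,y)]`, we have
`E[min{1, (M−1)·g(X,Y)}] ≤ E[exp(−[i_α(X,Y) − log(M−1)]⁺)]`. -/
theorem rcus_relaxation
    {Ω 𝒳 𝒴 : Type*} [MeasurableSpace Ω] [MeasurableSpace 𝒳] [MeasurableSpace 𝒴]
    (P : Measure Ω) [IsProbabilityMeasure P]
    (M : ℕ) (hM : 2 ≤ M)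
    (X : Ω → 𝒳) (Y : Ω → 𝒴) (hX : Measurable X) (hY : Measurable Y)
    (q : 𝒳 × 𝒴 → ℝ) (hq : Measurable q) (hqpos : ∀ p, 0 < q p)
    (α : ℝ) (hα : 0 < α)
    (hint : ∀ y, Integrable (fun x' => q (x', y) ^ α) (Measure.map X P))
    (hpos : ∀ y, 0 < ∫ x', q (x', y) ^ α ∂(Measure.map X P))
    (g : 𝒳 → 𝒴 → ℝ≥0∞)
    (hg : ∀ x y, g x y = (Measure.map X P) {x' | q (x, y) ≤ q (x', y)})
    (iα : 𝒳 → 𝒴 → ℝ)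
    (hiα : ∀ x y,
      iα x y = Real.log (q (x, y) ^ α / ∫ x', q (x', y) ^ α ∂(Measure.map X P))) :
    ∫⁻ ω, min 1 ((M - 1 : ℕ) * g (X ω) (Y ω)) ∂P ≤
      ∫⁻ ω, ENNReal.ofReal
        (Real.exp (-(max 0 (iα (X ω) (Y ω) - Real.log ((M : ℝ) - 1))))) ∂P :=
  rcus_relaxation_general P M hM X Y q hqpos α hα hint hpos g hg iα hiα
end

section
/- Let M ≥ 2 be an integer. Let X, X₂, …, X_M be identically distributed random elements of 𝒳 with X₂,…,X_M mutually independent, each distributed as X, and (X₂,…,X_M) independent of the pair (X,Y), where Y is a random element of 𝒴. Let q : 𝒳 × 𝒴 → (0,∞) be measurable, let α > 0, let X̄ be independent of everything with the same law as X, assume 0 < E[q(X̄,y)^α] < ∞ for every y, and define i_α(x,y) = log( q(x,y)^α / E[q(X̄,y)^α] ). Then the probability that some competing codeword achieves a metric at least as large as the transmitted one satisfies P[∃ j ∈ {2,…,M} : q(X_j, Y) ≥ q(X, Y)] ≤ E[ exp( −[ i_α(X,Y) − log(M−1) ]⁺ ) ], where [a]⁺ = max{0,a}. In particular, with M = 2^k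 codewords the bound reads E[ exp( −[ i_α(X,Y) − log(2^k − 1) ]⁺ ) ]. -/
/-!
Condition on the transmitted pair `(X, Y) = (x, y)`. By independence each competing codeword
still has the law of `X`, so the union bound and Markov's inequality applied to
`q(·, y)^α` bound the conditional error probability by `(M - 1) E[q(X̄, y)^α] / q(x, y)^α
= (M - 1) exp(-i_α(x, y))`. Being a probability it is also at most `1`, and
`min 1 ((M - 1) e^{-i}) = exp(-[i - log(M - 1)]⁺)`; averaging over `(X, Y)` gives the bound.
-/

open MeasureTheory ProbabilityTheory
open scoped ENNReal

lemma Real.min_one_div_eq_exp_neg_max {t r : ℝ} (ht : 0 < t) (hr : 0 < r) :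
    min 1 (t / r) = Real.exp (-max 0 (Real.log r - Real.log t)) := by
  rw [← min_neg_neg, Real.exp_monotone.map_min, neg_zero, Real.exp_zero, neg_sub,
    Real.exp_sub, Real.exp_log ht, Real.exp_log hr]

lemma measure_exists_apply_mem_le {ι α : Type*} [Fintype ι] [MeasurableSpace α]
    {μ : Measure (ι → α)} {ν : Measure α} (hμ : ∀ j, μ.map (fun c => c j) = ν) (B : Set α) :
    μ {c | ∃ j, c j ∈ B} ≤ Fintype.card ι * ν B := by
  calc μ {c | ∃ j, c j ∈ B} = μ (⋃ j, (fun c => c j) ⁻¹' B) := by rw [Set.ofPred_exists]; rfl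
    _ ≤ ∑ j, μ ((fun c => c j) ⁻¹' B) := measure_iUnion_fintype_le _ _
    _ ≤ ∑ _j : ι, ν B := Finset.sum_le_sum fun j _ => by
        rw [← hμ j]
        exact Measure.le_map_apply (measurable_pi_apply (X := fun _ : ι => α) j).aemeasurable B
    _ = Fintype.card ι * ν B := by simp

lemma measure_ge_le_ofReal_integral_rpow_div {α : Type*} [MeasurableSpace α] {ν : Measure α}
    {g : α → ℝ} (hg : ∀ x, 0 ≤ g x) {s : ℝ} (hs : 0 ≤ s)
    (hint : Integrable (fun x => g x ^ s) ν) {a : ℝ} (ha : 0 < a) :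
    ν {x | a ≤ g x} ≤ ENNReal.ofReal ((∫ x, g x ^ s ∂ν) / a ^ s) := by
  have has : 0 < a ^ s := Real.rpow_pos_of_pos ha s
  calc ν {x | a ≤ g x} ≤ ν {x | ENNReal.ofReal (a ^ s) ≤ ENNReal.ofReal (g x ^ s)} :=
        measure_mono fun x hx => ENNReal.ofReal_le_ofReal (Real.rpow_le_rpow ha.le hx hs)
    _ ≤ (∫⁻ x, ENNReal.ofReal (g x ^ s) ∂ν) / ENNReal.ofReal (a ^ s) :=
        meas_ge_le_lintegral_div hint.aemeasurable.ennreal_ofReal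
          (ENNReal.ofReal_pos.mpr has).ne' ENNReal.ofReal_ne_top
    _ = ENNReal.ofReal ((∫ x, g x ^ s ∂ν) / a ^ s) := by
        rw [← ofReal_integral_eq_lintegral_ofReal hint
          (Filter.Eventually.of_forall fun x => Real.rpow_nonneg (hg x) s),
          ENNReal.ofReal_div_of_pos has]

lemma measure_exists_ge_le_exp_neg_max {ι α : Type*} [Fintype ι] [Nonempty ι] [MeasurableSpace α]
    {μ : Measure (ι → α)} [IsProbabilityMeasure μ] {ν : Measure α}
    (hμ : ∀ j, μ.map (fun c => c j) = ν) {g : α → ℝ} (hg : ∀ x, 0 ≤ g x) {s : ℝ} (hs : 0 ≤ s)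
    (hint : Integrable (fun x => g x ^ s) ν) (hE : 0 < ∫ x, g x ^ s ∂ν) {a : ℝ} (ha : 0 < a) :
    μ {c | ∃ j, a ≤ g (c j)} ≤ ENNReal.ofReal (Real.exp
      (-max 0 (Real.log (a ^ s / ∫ x, g x ^ s ∂ν) - Real.log (Fintype.card ι)))) := by
  have hcard : (0 : ℝ) < Fintype.card ι := by exact_mod_cast Fintype.card_pos
  have has : 0 < a ^ s := Real.rpow_pos_of_pos ha s
  rw [← Real.min_one_div_eq_exp_neg_max hcard (div_pos has hE), ENNReal.ofReal_min,
    ENNReal.ofReal_one, div_div_eq_mul_div, mul_div_assoc,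
    ENNReal.ofReal_mul hcard.le, ENNReal.ofReal_natCast]
  refine le_min prob_le_one ((measure_exists_apply_mem_le hμ {x | a ≤ g x}).trans ?_)
  gcongr
  exact measure_ge_le_ofReal_integral_rpow_div hg hs hint ha

lemma ProbabilityTheory.IndepFun.measure_mem_le_lintegral {Ω α β : Type*} [MeasurableSpace Ω]
    [MeasurableSpace α] [MeasurableSpace β] {P : Measure Ω} [IsFiniteMeasure P]
    {Z : Ω → α} {W : Ω → β} (hZ : Measurable Z) (hW : Measurable W) (hZW : IndepFun Z W P)
    {S : Set (α × β)} (hS : MeasurableSet S) {F : α → ℝ≥0∞}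
    (hF : ∀ z, P.map W (Prod.mk z ⁻¹' S) ≤ F z) :
    P {ω | (Z ω, W ω) ∈ S} ≤ ∫⁻ ω, F (Z ω) ∂P := by
  calc P {ω | (Z ω, W ω) ∈ S} = P.map (fun ω => (Z ω, W ω)) S :=
        (Measure.map_apply (hZ.prodMk hW) hS).symm
    _ = ∫⁻ z, P.map W (Prod.mk z ⁻¹' S) ∂P.map Z := by
        rw [(indepFun_iff_map_prod_eq_prod_map_map hZ.aemeasurable hW.aemeasurable).mp hZW,
          Measure.prod_apply hS]
    _ ≤ ∫⁻ z, F z ∂P.map Z := lintegral_mono hF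
    _ ≤ ∫⁻ ω, F (Z ω) ∂P := lintegral_map_le F Z

theorem rcus_bound_general
    {Ω 𝒳 𝒴 : Type*} [MeasurableSpace Ω] [MeasurableSpace 𝒳] [MeasurableSpace 𝒴]
    (P : Measure Ω) [IsProbabilityMeasure P]
    (M : ℕ) (hM : 2 ≤ M)
    (X : Ω → 𝒳) (Y : Ω → 𝒴) (C : Fin (M - 1) → Ω → 𝒳)
    (hX : Measurable X) (hY : Measurable Y) (hC : ∀ j, Measurable (C j))
    (hident : ∀ j, Measure.map (C j) P = Measure.map X P)
    (hCXY : IndepFun (fun ω => fun j => C j ω) (fun ω => (X ω, Y ω)) P)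
    (q : 𝒳 × 𝒴 → ℝ) (hq : Measurable q) (hqpos : ∀ p, 0 < q p)
    (α : ℝ) (hα : 0 < α)
    (hint : ∀ y, Integrable (fun x' => q (x', y) ^ α) (Measure.map X P))
    (hpos : ∀ y, 0 < ∫ x', q (x', y) ^ α ∂(Measure.map X P))
    (iα : 𝒳 → 𝒴 → ℝ)
    (hiα : ∀ x y,
      iα x y = Real.log (q (x, y) ^ α / ∫ x', q (x', y) ^ α ∂(Measure.map X P))) :
    P {ω | ∃ j, q (X ω, Y ω) ≤ q (C j ω, Y ω)} ≤
      ∫⁻ ω, ENNReal.ofReal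
        (Real.exp (-(max 0 (iα (X ω) (Y ω) - Real.log ((M : ℝ) - 1))))) ∂P
    ∧ ∀ k : ℕ, M = 2 ^ k →
        P {ω | ∃ j, q (X ω, Y ω) ≤ q (C j ω, Y ω)} ≤
          ∫⁻ ω, ENNReal.ofReal
            (Real.exp (-(max 0 (iα (X ω) (Y ω) - Real.log ((2 : ℝ) ^ k - 1))))) ∂P := by
  have : Nonempty (Fin (M - 1)) := ⟨⟨0, by omega⟩⟩
  have hcard : (Fintype.card (Fin (M - 1)) : ℝ) = M - 1 := by
    rw [Fintype.card_fin, Nat.cast_sub (by omega), Nat.cast_one]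
  have hCvec : Measurable fun ω j => C j ω := measurable_pi_lambda _ hC
  have : IsProbabilityMeasure (P.map fun ω j => C j ω) :=
    Measure.isProbabilityMeasure_map hCvec.aemeasurable
  have hcodebook : ∀ j, (P.map fun ω j => C j ω).map (fun c => c j) = P.map X := fun j => by
    rw [Measure.map_map (measurable_pi_apply j) hCvec]
    exact hident j
  have hS : MeasurableSet {p : (𝒳 × 𝒴) × (Fin (M - 1) → 𝒳) | ∃ j, q p.1 ≤ q (p.2 j, p.1.2)} :=
    (Measurable.exists fun j => measurableSet_setOfPred.mp
      (measurableSet_le (by fun_prop) (by fun_prop))).setOf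
  have hbound : P {ω | ∃ j, q (X ω, Y ω) ≤ q (C j ω, Y ω)} ≤ ∫⁻ ω, ENNReal.ofReal
      (Real.exp (-(max 0 (iα (X ω) (Y ω) - Real.log ((M : ℝ) - 1))))) ∂P :=
    hCXY.symm.measure_mem_le_lintegral (hX.prodMk hY) hCvec hS
      (F := fun z => ENNReal.ofReal (Real.exp (-(max 0 (iα z.1 z.2 - Real.log ((M : ℝ) - 1))))))
      fun z => by
        simpa only [hiα, hcard, Prod.mk.eta, Set.preimage_ofPred_eq] using
          measure_exists_ge_le_exp_neg_max hcodebook (fun x => (hqpos (x, z.2)).le) hα.le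
            (hint z.2) (hpos z.2) (hqpos z)
  refine ⟨hbound, fun k hk => ?_⟩
  simpa [hk] using hbound

/-- **Abstract form of Theorem 1 (the RCUs bound).**
A random codebook of `M` i.i.d. codewords is used: `X` is the transmitted codeword, `Y` the
channel output, and `C j`, `j = 1, …, M-1`, are the competing codewords `X₂, …, X_M`, each
distributed as `X`, mutually independent, and (as a vector) independent of `(X, Y)`.  The
metric `q` is positive and measurable, `α > 0`, `X̄` is an independent copy of `X` (encoded
via its law `Measure.map X P`), `0 < E[q(X̄,y)^α] < ∞` for every `y`, and
`i_α(x,y) = log(q(x,y)^α / E[q(X̄,y)^α])`.  Then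
`P[∃ j : q(X_j, Y) ≥ q(X, Y)] ≤ E[exp(−[i_α(X,Y) − log(M−1)]⁺)]`;
in particular, with `M = 2^k` codewords the bound reads
`E[exp(−[i_α(X,Y) − log(2^k−1)]⁺)]`. -/
theorem rcus_bound
    {Ω 𝒳 𝒴 : Type*} [MeasurableSpace Ω] [MeasurableSpace 𝒳] [MeasurableSpace 𝒴]
    (P : Measure Ω) [IsProbabilityMeasure P]
    (M : ℕ) (hM : 2 ≤ M)
    (X : Ω → 𝒳) (Y : Ω → 𝒴) (C : Fin (M - 1) → Ω → 𝒳)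
    (hX : Measurable X) (hY : Measurable Y) (hC : ∀ j, Measurable (C j))
    (hident : ∀ j, Measure.map (C j) P = Measure.map X P)
    (hCindep : iIndepFun C P)
    (hCXY : IndepFun (fun ω => fun j => C j ω) (fun ω => (X ω, Y ω)) P)
    (q : 𝒳 × 𝒴 → ℝ) (hq : Measurable q) (hqpos : ∀ p, 0 < q p)
    (α : ℝ) (hα : 0 < α)
    (hint : ∀ y, Integrable (fun x' => q (x', y) ^ α) (Measure.map X P))
    (hpos : ∀ y, 0 < ∫ x', q (x', y) ^ α ∂(Measure.map X P))
    (iα : 𝒳 → 𝒴 → ℝ)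
    (hiα : ∀ x y,
      iα x y = Real.log (q (x, y) ^ α / ∫ x', q (x', y) ^ α ∂(Measure.map X P))) :
    P {ω | ∃ j, q (X ω, Y ω) ≤ q (C j ω, Y ω)} ≤
      ∫⁻ ω, ENNReal.ofReal
        (Real.exp (-(max 0 (iα (X ω) (Y ω) - Real.log ((M : ℝ) - 1))))) ∂P
    ∧ ∀ k : ℕ, M = 2 ^ k →
        P {ω | ∃ j, q (X ω, Y ω) ≤ q (C j ω, Y ω)} ≤
          ∫⁻ ω, ENNReal.ofReal
            (Real.exp (-(max 0 (iα (X ω) (Y ω) - Real.log ((2 : ℝ) ^ k - 1))))) ∂P :=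
  rcus_bound_general P M hM X Y C hX hY hC hident hCXY q hq hqpos α hα hint hpos iα hiα
end

section
/- Let λ ∈ (0,1), ε̄ ∈ (0,1), let n be a positive integer, and let J ~ Geom(1−ε̄) and T ~ Geom(1−(1−λ)^n) be independent random variables. Set p = (1−ε̄)/(1 − ε̄(1−λ)^n), G_T(s) = (1−(1−λ)^n)s/(1−(1−λ)^n s), and G_{H⁽⁰⁾}(s) = (1−ε̄(1−λ)^n)s/(1−ε̄(1−λ)^n s). Then for every s ∈ [0,1], the conditional probability generating function of T given the event {J ≤ T} satisfies E[s^T | J ≤ T] = ( G_T(s) − (1−p) G_{H⁽⁰⁾}(s) ) / p. -/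
open MeasureTheory ProbabilityTheory
open scoped ENNReal

private lemma fibers_tsum' {Ω : Type*} [MeasurableSpace Ω] (P : Measure Ω) [IsProbabilityMeasure P]
    (X : Ω → ℕ) (hX : Measurable X) :
    ∑' k : ℕ, P (X ⁻¹' {k}) = 1 := by
  rw [← measure_iUnion
      (fun i j hij => Disjoint.preimage X (by simpa using hij))
      (fun k => hX (measurableSet_singleton k))]
  rw [show (⋃ k, X ⁻¹' {k}) = Set.univ by ext ω; simp, measure_univ]

private lemma geom_zero' {Ω : Type*} [MeasurableSpace Ω] (P : Measure Ω) [IsProbabilityMeasure P]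
    (X : Ω → ℕ) (hX : Measurable X) (r : ℝ) (hr0 : 0 ≤ r) (hr1 : r < 1)
    (hgeom : ∀ k : ℕ, 1 ≤ k → P (X ⁻¹' {k}) = ENNReal.ofReal (r ^ (k - 1) * (1 - r))) :
    P (X ⁻¹' {0}) = 0 := by
  have h1 := fibers_tsum' P X hX
  rw [tsum_eq_zero_add' ENNReal.summable] at h1
  have h2 : ∑' k : ℕ, P (X ⁻¹' {k + 1}) = 1 := by
    have hterm : ∀ k : ℕ, P (X ⁻¹' {k + 1}) = ENNReal.ofReal (r ^ k * (1 - r)) := by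
      intro k; rw [hgeom (k + 1) (by omega)]; norm_num
    simp_rw [hterm]
    rw [← ENNReal.ofReal_tsum_of_nonneg (fun k => mul_nonneg (pow_nonneg hr0 k) (by linarith))
      ((summable_geometric_of_lt_one hr0 hr1).mul_right _)]
    rw [tsum_mul_right, tsum_geometric_of_lt_one hr0 hr1,
      inv_mul_cancel₀ (by linarith)]
    simp
  rw [h2] at h1
  exact (ENNReal.add_left_inj ENNReal.one_ne_top).mp (by rw [h1, zero_add])

/-- **Conditional PGF of the interarrival time given successful delivery
(equation (15) of Theorem 2).**
`J ~ Geom(1−ε̄)` is the number of ARQ rounds needed to deliver a packet and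
`T ~ Geom(1−(1−λ)^n)` the number of frames between two consecutive packet arrivals,
independent of `J`.  With `p = (1−ε̄)/(1 − ε̄(1−λ)^n)`,
`G_T(s) = (1−(1−λ)^n)s/(1−(1−λ)^n s)` and
`G_{H⁽⁰⁾}(s) = (1−ε̄(1−λ)^n)s/(1−ε̄(1−λ)^n s)`, the conditional probability generating
function of `T` given `{J ≤ T}` satisfies
`E[s^T | J ≤ T] = (G_T(s) − (1−p) G_{H⁽⁰⁾}(s))/p` for every `s ∈ [0,1]`. -/
theorem conditional_interarrival_pgf
    {Ω : Type*} [MeasurableSpace Ω] (P : Measure Ω) [IsProbabilityMeasure P]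
    (lam : ℝ) (hlam : lam ∈ Set.Ioo (0 : ℝ) 1)
    (eps : ℝ) (heps : eps ∈ Set.Ioo (0 : ℝ) 1)
    (n : ℕ) (hn : 0 < n)
    (J T : Ω → ℕ) (hJ : Measurable J) (hT : Measurable T)
    (hJgeom : ∀ k : ℕ, 1 ≤ k →
      P {ω | J ω = k} = ENNReal.ofReal (eps ^ (k - 1) * (1 - eps)))
    (hTgeom : ∀ k : ℕ, 1 ≤ k →
      P {ω | T ω = k}
        = ENNReal.ofReal (((1 - lam) ^ n) ^ (k - 1) * (1 - (1 - lam) ^ n)))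
    (hindep : IndepFun J T P)
    (p : ℝ) (hp : p = (1 - eps) / (1 - eps * (1 - lam) ^ n))
    (GT GH : ℝ → ℝ)
    (hGT : ∀ s, GT s = (1 - (1 - lam) ^ n) * s / (1 - (1 - lam) ^ n * s))
    (hGH : ∀ s, GH s = (1 - eps * (1 - lam) ^ n) * s / (1 - eps * (1 - lam) ^ n * s)) :
    ∀ s ∈ Set.Icc (0 : ℝ) 1,
      ∫ ω, s ^ T ω ∂(P[|{ω | J ω ≤ T ω}])
        = (GT s - (1 - p) * GH s) / p := by
  intro s hs
  obtain ⟨hl0, hl1⟩ := hlam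
  obtain ⟨he0, he1⟩ := heps
  obtain ⟨hs0, hs1⟩ := hs
  set q : ℝ := (1 - lam) ^ n with hqdef
  have hq0 : 0 < q := pow_pos (by linarith) n
  have hq1 : q < 1 := pow_lt_one₀ (by linarith) (by linarith) hn.ne'
  clear_value q
  have heq1 : eps * q < 1 := by nlinarith
  have hp0 : 0 < p := by
    rw [hp]; apply div_pos (by linarith); nlinarith
  set A : Set Ω := {ω | J ω ≤ T ω} with hA
  have hAm : MeasurableSet A := measurableSet_le hJ hT
  -- zero fibers
  have hT0 : P (T ⁻¹' {0}) = 0 :=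
    geom_zero' P T hT q hq0.le hq1 (fun k hk => hTgeom k hk)
  have hJ0 : P (J ⁻¹' {0}) = 0 :=
    geom_zero' P J hJ eps he0.le he1 (fun k hk => hJgeom k hk)
  -- P(J ≤ k)
  have hJle : ∀ k : ℕ, P (J ⁻¹' Set.Iic k) = ENNReal.ofReal (1 - eps ^ k) := by
    intro k
    have hset : J ⁻¹' Set.Iic k = ⋃ j ∈ Finset.range (k + 1), J ⁻¹' {j} := by
      ext ω; simp [Nat.lt_succ_iff]
    rw [hset, measure_biUnion_finset
      (fun i _ j _ hij => Disjoint.preimage J (by simpa using hij))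
      (fun j _ => hJ (measurableSet_singleton j))]
    rw [Finset.sum_range_succ']
    rw [hJ0, add_zero]
    have hterm : ∀ j : ℕ, P (J ⁻¹' {j + 1}) = ENNReal.ofReal (eps ^ j * (1 - eps)) := by
      intro j; have h := hJgeom (j + 1) (by omega); simp only [Nat.add_sub_cancel] at h; exact h
    simp_rw [hterm]
    rw [← ENNReal.ofReal_sum_of_nonneg
      (fun j _ => mul_nonneg (pow_nonneg he0.le j) (by linarith))]
    congr 1
    rw [← Finset.sum_mul, geom_sum_eq (ne_of_lt he1), div_mul_eq_mul_div,
      div_eq_iff (sub_ne_zero.mpr (ne_of_lt he1))]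
    ring
  -- fibers of A
  have hAfib : ∀ k : ℕ, 1 ≤ k → P (A ∩ T ⁻¹' {k})
      = ENNReal.ofReal ((1 - eps ^ k) * (q ^ (k - 1) * (1 - q))) := by
    intro k hk
    have hset : A ∩ T ⁻¹' {k} = J ⁻¹' Set.Iic k ∩ T ⁻¹' {k} := by
      ext ω
      simp only [hA, Set.mem_inter_iff, Set.mem_setOf_eq, Set.mem_preimage,
        Set.mem_singleton_iff, Set.mem_Iic]
      constructor
      · rintro ⟨h1, h2⟩; exact ⟨h2 ▸ h1, h2⟩
      · rintro ⟨h1, h2⟩; exact ⟨h2 ▸ h1, h2⟩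
    have hTfib : P (T ⁻¹' {k}) = ENNReal.ofReal (q ^ (k - 1) * (1 - q)) := hTgeom k hk
    rw [hset, hindep.measure_inter_preimage_eq_mul _ _ measurableSet_Iic
      (measurableSet_singleton k), hJle k, hTfib,
      ← ENNReal.ofReal_mul (by nlinarith [pow_le_one₀ he0.le he1.le (n := k)])]
  -- the key geometric sum
  have key : ∀ t : ℝ, 0 ≤ t → t ≤ 1 →
      (∑' k : ℕ, ENNReal.ofReal (t ^ k) * P (A ∩ T ⁻¹' {k}))
        = ENNReal.ofReal ((1 - q) * t / (1 - q * t)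
            - eps * ((1 - q) * t / (1 - eps * q * t))) := by
    intro t ht0 ht1
    have hqt : q * t < 1 := by nlinarith
    have heqt : eps * q * t < 1 := by nlinarith
    rw [tsum_eq_zero_add' ENNReal.summable]
    have h0 : P (A ∩ T ⁻¹' {0}) = 0 :=
      measure_mono_null Set.inter_subset_right hT0
    rw [h0, mul_zero, zero_add]
    have hfun : ∀ k : ℕ, t ^ (k + 1) * ((1 - eps ^ (k + 1)) * (q ^ k * (1 - q)))
        = (1 - q) * t * (q * t) ^ k - eps * ((1 - q) * t) * (eps * q * t) ^ k := by
      intro k; ring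
    have hsummable1 : Summable (fun k : ℕ => (1 - q) * t * (q * t) ^ k) :=
      (summable_geometric_of_lt_one (by positivity) hqt).mul_left _
    have hsummable2 : Summable (fun k : ℕ => eps * ((1 - q) * t) * (eps * q * t) ^ k) :=
      (summable_geometric_of_lt_one (by positivity) heqt).mul_left _
    have hsummable : Summable
        (fun k : ℕ => t ^ (k + 1) * ((1 - eps ^ (k + 1)) * (q ^ k * (1 - q)))) := by
      refine Summable.congr (hsummable1.sub hsummable2) fun k => ?_
      rw [hfun k]
    have hnn : ∀ k : ℕ, 0 ≤ t ^ (k + 1) * ((1 - eps ^ (k + 1)) * (q ^ k * (1 - q))) := by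
      intro k
      have h1 : eps ^ (k + 1) ≤ 1 := pow_le_one₀ he0.le he1.le
      have h2 : (0:ℝ) ≤ 1 - eps ^ (k+1) := by linarith
      exact mul_nonneg (pow_nonneg ht0 _)
        (mul_nonneg h2 (mul_nonneg (pow_nonneg hq0.le _) (by linarith)))
    calc (∑' k : ℕ, ENNReal.ofReal (t ^ (k + 1)) * P (A ∩ T ⁻¹' {k + 1}))
        = ∑' k : ℕ, ENNReal.ofReal (t ^ (k + 1) * ((1 - eps ^ (k + 1)) * (q ^ k * (1 - q)))) := by
          refine tsum_congr fun k => ?_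
          rw [hAfib (k + 1) (by omega), ← ENNReal.ofReal_mul (pow_nonneg ht0 (k + 1))]
          norm_num
      _ = ENNReal.ofReal
            (∑' k : ℕ, t ^ (k + 1) * ((1 - eps ^ (k + 1)) * (q ^ k * (1 - q)))) :=
          (ENNReal.ofReal_tsum_of_nonneg hnn hsummable).symm
      _ = ENNReal.ofReal ((1 - q) * t / (1 - q * t)
            - eps * ((1 - q) * t / (1 - eps * q * t))) := by
          congr 1
          rw [tsum_congr hfun,
            Summable.tsum_sub hsummable1 hsummable2, tsum_mul_left, tsum_mul_left,
            tsum_geometric_of_lt_one (by positivity) hqt,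
            tsum_geometric_of_lt_one (by positivity) heqt]
          rw [div_eq_mul_inv, div_eq_mul_inv]
          ring
  -- P A
  have hPA : P A = ENNReal.ofReal p := by
    have hA_union : A = ⋃ k : ℕ, A ∩ T ⁻¹' {k} := by
      ext ω; simp
    have hmeas : ∀ k : ℕ, MeasurableSet (A ∩ T ⁻¹' {k}) :=
      fun k => hAm.inter (hT (measurableSet_singleton k))
    have hdisj : Pairwise (Function.onFun Disjoint (fun k : ℕ => A ∩ T ⁻¹' {k})) := by
      intro i j hij
      exact Set.disjoint_left.mpr (fun ω hi hj => hij (by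
        have h1 := hi.2; have h2 := hj.2
        simp only [Set.mem_preimage, Set.mem_singleton_iff] at h1 h2
        omega))
    calc P A = ∑' k : ℕ, P (A ∩ T ⁻¹' {k}) := by
          conv_lhs => rw [hA_union]
          exact measure_iUnion hdisj hmeas
      _ = ∑' k : ℕ, ENNReal.ofReal ((1:ℝ) ^ k) * P (A ∩ T ⁻¹' {k}) := by
          simp
      _ = ENNReal.ofReal ((1 - q) * 1 / (1 - q * 1)
            - eps * ((1 - q) * 1 / (1 - eps * q * 1))) := key 1 zero_le_one le_rfl
      _ = ENNReal.ofReal p := by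
          rw [hp]; congr 1
          rw [mul_one, mul_one, mul_one, div_self (by linarith : (1:ℝ) - q ≠ 0)]
          have hne : (1:ℝ) - eps * q ≠ 0 := by nlinarith
          rw [eq_div_iff hne, sub_mul, one_mul, mul_assoc,
            div_mul_cancel₀ _ hne]
          ring
  have hPA_ne : P A ≠ 0 := by
    rw [hPA]; simp only [ne_eq, ENNReal.ofReal_eq_zero, not_le]; exact hp0
  -- nonneg of target real quantity
  have hqs1 : q * s < 1 := by nlinarith
  have heqs1 : eps * q * s < 1 := by nlinarith
  have hR0 : 0 ≤ (1 - q) * s / (1 - q * s) - eps * ((1 - q) * s / (1 - eps * q * s)) := by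
    have h2 : (1 - q) * s / (1 - q * s) ≥ (1 - q) * s / (1 - eps * q * s) := by
      gcongr
      all_goals first
        | exact mul_nonneg (by linarith) hs0
        | linarith
        | nlinarith
    have h3 : eps * ((1 - q) * s / (1 - eps * q * s)) ≤ (1 - q) * s / (1 - eps * q * s) := by
      have : (0:ℝ) ≤ (1 - q) * s / (1 - eps * q * s) :=
        div_nonneg (mul_nonneg (by linarith) hs0) (by linarith)
      nlinarith
    linarith
  -- final computation
  have hmeasf : Measurable (fun ω => s ^ T ω) :=
    (measurable_from_nat (f := fun k : ℕ => s ^ k)).comp hT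
  rw [integral_eq_lintegral_of_nonneg_ae
    (ae_of_all _ fun ω => pow_nonneg hs0 (T ω)) hmeasf.aestronglyMeasurable]
  have hcond : P[|A] = (P A)⁻¹ • P.restrict A := rfl
  rw [hcond, lintegral_smul_measure]
  have hdecomp : ∫⁻ ω in A, ENNReal.ofReal (s ^ T ω) ∂P
      = ∑' k : ℕ, ENNReal.ofReal (s ^ k) * P (A ∩ T ⁻¹' {k}) := by
    have hA_union : A = ⋃ k : ℕ, A ∩ T ⁻¹' {k} := by
      ext ω; simp
    have hmeas : ∀ k : ℕ, MeasurableSet (A ∩ T ⁻¹' {k}) :=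
      fun k => hAm.inter (hT (measurableSet_singleton k))
    have hdisj : Pairwise (Function.onFun Disjoint (fun k : ℕ => A ∩ T ⁻¹' {k})) := by
      intro i j hij
      exact Set.disjoint_left.mpr (fun ω hi hj => hij (by
        have h1 := hi.2; have h2 := hj.2
        simp only [Set.mem_preimage, Set.mem_singleton_iff] at h1 h2
        omega))
    conv_lhs => rw [hA_union]
    rw [lintegral_iUnion hmeas hdisj]
    refine tsum_congr fun k => ?_
    rw [setLIntegral_congr_fun (hmeas k)
      ((fun ω hω => by
        have : T ω = k := hω.2
        rw [this] : ∀ ω ∈ A ∩ T ⁻¹' {k}, ENNReal.ofReal (s ^ T ω) = ENNReal.ofReal (s ^ k))),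
      setLIntegral_const]
  rw [hdecomp, key s hs0 hs1, hPA]
  rw [smul_eq_mul, ENNReal.toReal_mul, ENNReal.toReal_inv, ENNReal.toReal_ofReal hp0.le,
    ENNReal.toReal_ofReal hR0]
  rw [hGT, hGH, hp]
  rw [inv_mul_eq_div]
  have hd1 : (1:ℝ) - q * s ≠ 0 := by linarith
  have hd2 : (1:ℝ) - eps * q * s ≠ 0 := by linarith
  have hd3 : (1:ℝ) - eps * q ≠ 0 := by nlinarith
  congr 1
  congr 1
  rw [one_sub_div hd3]
  field_simp
  ring
end

section
/- Let λ ∈ (0,1), ε̄ ∈ (0,1), let n be a positive integer, and let J ~ Geom(1−ε̄) and T ~ Geom(1−(1−λ)^n) be independent random variables. Set q = 1−(1−λ)^n and p = (1−ε̄)/(1 − ε̄(1−λ)^n). Then for every positive integer t, P(T = t | J ≤ T) = q (1−q)^{t−1} (1 − ε̄^t) / p. -/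
open MeasureTheory ProbabilityTheory
open scoped ENNReal

/-- **PMF of the conditional interarrival time given successful delivery.**
`J ~ Geom(1−ε̄)` is the number of ARQ rounds needed to deliver a packet and
`T ~ Geom(1−(1−λ)^n)` the number of frames between two consecutive packet arrivals,
independent of `J`.  With `q = 1−(1−λ)^n` and `p = (1−ε̄)/(1−ε̄(1−λ)^n)`, for every
positive integer `t`, `P(T = t | J ≤ T) = q (1−q)^{t−1} (1 − ε̄^t) / p`. -/
theorem conditional_interarrival_pmf
    {Ω : Type*} [MeasurableSpace Ω] (P : Measure Ω) [IsProbabilityMeasure P]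
    (lam : ℝ) (hlam : lam ∈ Set.Ioo (0 : ℝ) 1)
    (eps : ℝ) (heps : eps ∈ Set.Ioo (0 : ℝ) 1)
    (n : ℕ) (hn : 0 < n)
    (J T : Ω → ℕ) (hJ : Measurable J) (hT : Measurable T)
    (hJgeom : ∀ k : ℕ, 1 ≤ k →
      P {ω | J ω = k} = ENNReal.ofReal (eps ^ (k - 1) * (1 - eps)))
    (hTgeom : ∀ k : ℕ, 1 ≤ k →
      P {ω | T ω = k}
        = ENNReal.ofReal (((1 - lam) ^ n) ^ (k - 1) * (1 - (1 - lam) ^ n)))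
    (hindep : IndepFun J T P)
    (q p : ℝ)
    (hq : q = 1 - (1 - lam) ^ n)
    (hp : p = (1 - eps) / (1 - eps * (1 - lam) ^ n)) :
    ∀ t : ℕ, 1 ≤ t →
      P[|{ω | J ω ≤ T ω}] {ω | T ω = t}
        = ENNReal.ofReal (q * (1 - q) ^ (t - 1) * (1 - eps ^ t) / p) := by
  obtain ⟨hl0, hl1⟩ := hlam
  obtain ⟨he0, he1⟩ := heps
  set r : ℝ := (1 - lam) ^ n with hrdef
  have hr0 : 0 < r := pow_pos (by linarith) n
  have hr1 : r < 1 := pow_lt_one₀ (by linarith) (by linarith) hn.ne'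
  have her : eps * r < 1 := by nlinarith
  have hp0 : 0 < p := by rw [hp]; exact div_pos (by linarith) (by linarith)
  have hJm : ∀ k : ℕ, MeasurableSet (J ⁻¹' {k}) := fun k => hJ (measurableSet_singleton k)
  have hTm : ∀ k : ℕ, MeasurableSet (T ⁻¹' {k}) := fun k => hT (measurableSet_singleton k)
  have hJgeom' : ∀ k : ℕ, 1 ≤ k →
      P (J ⁻¹' {k}) = ENNReal.ofReal (eps ^ (k - 1) * (1 - eps)) := hJgeom
  have hTgeom' : ∀ k : ℕ, 1 ≤ k →
      P (T ⁻¹' {k}) = ENNReal.ofReal (r ^ (k - 1) * (1 - r)) := hTgeom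
  -- a generic fact: if the fibers of a variable sum (over k ≥ 1) to 1, the fiber at 0 is null
  have key0 : ∀ (X : Ω → ℕ), Measurable X →
      (∑' k : ℕ, P (X ⁻¹' {k + 1})) = 1 → P (X ⁻¹' {0}) = 0 := by
    intro X hX hsum
    have hdisj : Pairwise (Function.onFun Disjoint fun k : ℕ => X ⁻¹' {k}) := by
      intro i j hij
      exact Set.disjoint_left.2 fun ω h1 h2 => hij ((h1 : X ω = i).symm.trans h2)
    have hcover : (⋃ k : ℕ, X ⁻¹' {k}) = Set.univ := by
      ext ω; simp
    have htot : (∑' k : ℕ, P (X ⁻¹' {k})) = 1 := by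
      rw [← measure_iUnion hdisj fun k => hX (measurableSet_singleton k), hcover, measure_univ]
    rw [tsum_eq_zero_add' ENNReal.summable, hsum] at htot
    have h1 : P (X ⁻¹' {0}) + 1 = 0 + 1 := by simpa using htot
    exact (ENNReal.add_left_inj ENNReal.one_ne_top).1 h1
  have hJ0 : P (J ⁻¹' {0}) = 0 := by
    refine key0 J hJ ?_
    have : ∀ k : ℕ, P (J ⁻¹' {k + 1}) = ENNReal.ofReal (eps ^ k * (1 - eps)) := by
      intro k; simpa using hJgeom' (k + 1) (by omega)
    rw [tsum_congr this,
      ← ENNReal.ofReal_tsum_of_nonneg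
        (fun k => mul_nonneg (pow_nonneg he0.le k) (by linarith))
        ((summable_geometric_of_lt_one he0.le he1).mul_right _),
      tsum_mul_right, tsum_geometric_of_lt_one he0.le he1,
      inv_mul_cancel₀ (by linarith), ENNReal.ofReal_one]
  have hT0 : P (T ⁻¹' {0}) = 0 := by
    refine key0 T hT ?_
    have : ∀ k : ℕ, P (T ⁻¹' {k + 1}) = ENNReal.ofReal (r ^ k * (1 - r)) := by
      intro k; simpa using hTgeom' (k + 1) (by omega)
    rw [tsum_congr this,
      ← ENNReal.ofReal_tsum_of_nonneg
        (fun k => mul_nonneg (pow_nonneg hr0.le k) (by linarith))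
        ((summable_geometric_of_lt_one hr0.le hr1).mul_right _),
      tsum_mul_right, tsum_geometric_of_lt_one hr0.le hr1,
      inv_mul_cancel₀ (by linarith), ENNReal.ofReal_one]
  -- CDF of J
  have hJle : ∀ t : ℕ, 1 ≤ t → P (J ⁻¹' Set.Iic t) = ENNReal.ofReal (1 - eps ^ t) := by
    intro t ht
    have hcoe : (↑(Finset.Iic t) : Set ℕ) = Set.Iic t := Finset.coe_Iic t
    have hIic : Finset.Iic t = Finset.range (t + 1) := by
      ext k; simp [Nat.lt_succ_iff]
    rw [← hcoe, ← sum_measure_preimage_singleton _ (fun k _ => hJm k), hIic,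
      Finset.sum_range_succ', hJ0, add_zero]
    have hterm : ∀ k ∈ Finset.range t,
        P (J ⁻¹' {k + 1}) = ENNReal.ofReal (eps ^ k * (1 - eps)) := by
      intro k _; simpa using hJgeom' (k + 1) (by omega)
    rw [Finset.sum_congr rfl hterm,
      ← ENNReal.ofReal_sum_of_nonneg
        (fun k _ => mul_nonneg (pow_nonneg he0.le k) (by linarith))]
    congr 1
    have := geom_sum_mul (x := eps) t
    have hs : (∑ k ∈ Finset.range t, eps ^ k) * (1 - eps) = 1 - eps ^ t := by nlinarith [this]
    rw [← Finset.sum_mul, hs]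
  -- joint probability
  have hJT : ∀ t : ℕ, 1 ≤ t →
      P ({ω | J ω ≤ T ω} ∩ T ⁻¹' {t})
        = ENNReal.ofReal ((1 - eps ^ t) * (r ^ (t - 1) * (1 - r))) := by
    intro t ht
    have hset : {ω | J ω ≤ T ω} ∩ T ⁻¹' {t} = J ⁻¹' Set.Iic t ∩ T ⁻¹' {t} := by
      ext ω
      simp only [Set.mem_inter_iff, Set.mem_setOf_eq, Set.mem_preimage,
        Set.mem_singleton_iff, Set.mem_Iic]
      omega
    have hepst : eps ^ t < 1 := pow_lt_one₀ he0.le he1 (by omega)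
    rw [hset, hindep.measure_inter_preimage_eq_mul _ _ measurableSet_Iic
      (measurableSet_singleton t), hJle t ht, hTgeom' t ht,
      ← ENNReal.ofReal_mul (by linarith)]
  -- probability of successful delivery
  have hAm : MeasurableSet {ω | J ω ≤ T ω} := measurableSet_le hJ hT
  have hA : P {ω | J ω ≤ T ω} = ENNReal.ofReal p := by
    have hdisj : Pairwise (Function.onFun Disjoint fun t : ℕ => {ω | J ω ≤ T ω} ∩ T ⁻¹' {t}) := by
      intro i j hij
      refine Set.disjoint_left.2 fun ω h1 h2 => hij ?_
      exact (h1.2 : T ω = i).symm.trans h2.2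
    have hcover : {ω | J ω ≤ T ω} = ⋃ t : ℕ, ({ω | J ω ≤ T ω} ∩ T ⁻¹' {t}) := by
      ext ω; simp
    rw [hcover, measure_iUnion hdisj fun t => hAm.inter (hTm t),
      tsum_eq_zero_add' ENNReal.summable]
    have h0 : P ({ω | J ω ≤ T ω} ∩ T ⁻¹' {0}) = 0 :=
      le_antisymm (le_trans (measure_mono Set.inter_subset_right) hT0.le) zero_le
    rw [h0, zero_add]
    have hterm : ∀ t : ℕ, P ({ω | J ω ≤ T ω} ∩ T ⁻¹' {t + 1})
        = ENNReal.ofReal ((1 - eps ^ (t + 1)) * (r ^ t * (1 - r))) := by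
      intro t; simpa using hJT (t + 1) (by omega)
    have hs1 : Summable (fun t : ℕ => (1 - r) * r ^ t) :=
      (summable_geometric_of_lt_one hr0.le hr1).mul_left _
    have hs2 : Summable (fun t : ℕ => ((1 - r) * eps) * (eps * r) ^ t) :=
      (summable_geometric_of_lt_one (by positivity) her).mul_left _
    have hfe : ∀ t : ℕ, (1 - eps ^ (t + 1)) * (r ^ t * (1 - r))
        = (1 - r) * r ^ t - ((1 - r) * eps) * (eps * r) ^ t := by
      intro t; rw [mul_pow]; ring
    have hsum : Summable (fun t : ℕ => (1 - eps ^ (t + 1)) * (r ^ t * (1 - r))) := by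
      simp only [hfe]; exact hs1.sub hs2
    rw [tsum_congr hterm,
      ← ENNReal.ofReal_tsum_of_nonneg (fun t => by
        have h1 : eps ^ (t + 1) < 1 := pow_lt_one₀ he0.le he1 (by omega)
        have h2 : (0:ℝ) ≤ r ^ t * (1 - r) := mul_nonneg (pow_nonneg hr0.le t) (by linarith)
        exact mul_nonneg (by linarith) h2) hsum]
    congr 1
    calc (∑' t : ℕ, (1 - eps ^ (t + 1)) * (r ^ t * (1 - r)))
        = ∑' t : ℕ, ((1 - r) * r ^ t - ((1 - r) * eps) * (eps * r) ^ t) :=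
          tsum_congr hfe
      _ = (1 - r) * (1 - r)⁻¹ - ((1 - r) * eps) * (1 - eps * r)⁻¹ := by
          rw [Summable.tsum_sub hs1 hs2, tsum_mul_left, tsum_mul_left,
            tsum_geometric_of_lt_one hr0.le hr1,
            tsum_geometric_of_lt_one (by positivity) her]
      _ = p := by
          have hne : (1 : ℝ) - eps * r ≠ 0 := by linarith
          rw [hp, mul_inv_cancel₀ (by linarith : (1 : ℝ) - r ≠ 0)]
          rw [eq_div_iff hne, sub_mul, one_mul, mul_assoc, inv_mul_cancel₀ hne]
          ring
  -- conclude
  intro t ht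
  have hepst : eps ^ t < 1 := pow_lt_one₀ he0.le he1 (by omega)
  have hJT' : P ({ω | J ω ≤ T ω} ∩ {ω | T ω = t})
      = ENNReal.ofReal ((1 - eps ^ t) * (r ^ (t - 1) * (1 - r))) := hJT t ht
  rw [cond_apply hAm P, hA, hJT', hq]
  rw [ENNReal.ofReal_div_of_pos hp0, ENNReal.div_eq_inv_mul]
  congr 2
  ring
end

section
/- Let ε̄ ∈ (0,1) and let n be a positive integer. For λ ∈ (0,1), let J_λ ~ Geom(1−ε̄) and T_λ ~ Geom(1−(1−λ)^n) be independent, let T⁽⁰⁾_λ be distributed as T_λ conditioned on {J_λ ≤ T_λ}, and let S ~ Geom(1−ε̄) be independent of T⁽⁰⁾_λ. Set A_λ = T⁽⁰⁾_λ + S. Then for every integer m ≥ 2, lim_{λ → 1⁻} P(A_λ ≥ m) = P(H ≥ m − 1) = ε̄^{m−2}, where H ~ Geom(1−ε̄). -/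
open MeasureTheory ProbabilityTheory Filter Topology Function
open scoped ENNReal symmDiff

/-! As `λ → 1` the success probability `1 - (1 - λ)^n` of `T_λ` tends to `1`. Conditioning on
`{J_λ ≤ T_λ}`, an event of probability at least `P(J_λ = 1) P(T_λ = 1) = (1 - ε̄)(1 - (1 - λ)^n)`,
inflates `P(T_λ ≠ 1) = (1 - λ)^n` by a bounded factor only, so `P(T⁽⁰⁾_λ ≠ 1) → 0`. On
`{T⁽⁰⁾_λ = 1}` the events `{A_λ ≥ m}` and `{S ≥ m - 1}` coincide, hence
`P(A_λ ≥ m) → P(S ≥ m - 1) = ε̄^{m-2} = P(H ≥ m - 1)`. -/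

section

variable {Ω : Type*} [MeasurableSpace Ω] {μ : Measure Ω}

theorem measure_le_eq_ofReal_pow_of_geometric {X : Ω → ℕ} {r : ℝ} (hr0 : 0 ≤ r) (hr1 : r < 1)
    (hX : Measurable X)
    (hgeom : ∀ k : ℕ, 1 ≤ k → μ {ω | X ω = k} = ENNReal.ofReal (r ^ (k - 1) * (1 - r)))
    (i : ℕ) : μ {ω | i + 1 ≤ X ω} = ENNReal.ofReal (r ^ i) := by
  have hunion : {ω | i + 1 ≤ X ω} = ⋃ k : ℕ, {ω | X ω = i + 1 + k} := by
    ext ω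
    simp only [Set.mem_ofPred_eq, Set.mem_iUnion]
    exact ⟨fun h => ⟨X ω - (i + 1), by omega⟩, fun ⟨k, hk⟩ => by omega⟩
  have hdisj : Pairwise (Disjoint on fun k : ℕ => {ω | X ω = i + 1 + k}) := by
    intro a b hab
    simp only [Function.onFun, Set.disjoint_left, Set.mem_ofPred_eq]
    omega
  have hterm (k : ℕ) :
      μ {ω | X ω = i + 1 + k} = ENNReal.ofReal (r ^ i * (1 - r) * r ^ k) := by
    rw [hgeom _ (by omega), show i + 1 + k - 1 = i + k by omega, pow_add]
    ring_nf
  have hnonneg : 0 ≤ r ^ i * (1 - r) := mul_nonneg (pow_nonneg hr0 _) (by linarith)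
  rw [hunion, measure_iUnion hdisj fun k => hX (measurableSet_singleton _)]
  simp_rw [hterm]
  rw [← ENNReal.ofReal_tsum_of_nonneg (fun k => mul_nonneg hnonneg (pow_nonneg hr0 _))
      ((summable_geometric_of_lt_one hr0 hr1).mul_left _),
    tsum_mul_left, tsum_geometric_of_lt_one hr0 hr1, mul_assoc,
    mul_inv_cancel₀ (by linarith), mul_one]

theorem measure_preimage_le_div_of_map_eq_map_cond {α : Type*} [MeasurableSpace α]
    {Y X : Ω → α} {C : Set Ω} (hY : Measurable Y) (hX : Measurable X)
    (hlaw : μ.map Y = (μ[|C]).map X) {s : Set α} (hs : MeasurableSet s) :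
    μ (Y ⁻¹' s) ≤ μ (X ⁻¹' s) / μ C := by
  rw [← Measure.map_apply hY hs, hlaw, Measure.map_apply hX hs, cond_apply' (hX hs),
    ENNReal.div_eq_inv_mul]
  exact mul_le_mul_right (measure_mono Set.inter_subset_right) _

theorem measure_ne_one_le_of_map_eq_map_cond [IsProbabilityMeasure μ] {J T T0 : Ω → ℕ}
    {eps r : ℝ} (heps : eps < 1) (hr1 : r < 1)
    (hT : Measurable T) (hT0 : Measurable T0)
    (hJ1 : μ {ω | J ω = 1} = ENNReal.ofReal (1 - eps))
    (hT1 : μ {ω | T ω = 1} = ENNReal.ofReal (1 - r)) (hJT : IndepFun J T μ)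
    (hlaw : μ.map T0 = (μ[|{ω | J ω ≤ T ω}]).map T) :
    μ {ω | T0 ω ≠ 1} ≤ ENNReal.ofReal (r / ((1 - eps) * (1 - r))) := by
  have hTne : μ {ω | T ω ≠ 1} = ENNReal.ofReal r := by
    rw [← Set.compl_ofPred,
      prob_compl_eq_one_sub (s := {ω | T ω = 1}) (hT (measurableSet_singleton 1)), hT1,
      ← ENNReal.ofReal_one, ← ENNReal.ofReal_sub _ (by linarith), sub_sub_cancel]
  have hcond : ENNReal.ofReal (1 - eps) * ENNReal.ofReal (1 - r) ≤ μ {ω | J ω ≤ T ω} := by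
    rw [← hJ1, ← hT1]
    calc μ {ω | J ω = 1} * μ {ω | T ω = 1}
        = μ (J ⁻¹' {1} ∩ T ⁻¹' {1}) :=
          (hJT.measure_inter_preimage_eq_mul _ _ (measurableSet_singleton 1)
            (measurableSet_singleton 1)).symm
      _ ≤ μ {ω | J ω ≤ T ω} := measure_mono fun ω ⟨h1, h2⟩ => (h1.trans h2.symm).le
  calc μ {ω | T0 ω ≠ 1}
      ≤ μ {ω | T ω ≠ 1} / μ {ω | J ω ≤ T ω} :=
        measure_preimage_le_div_of_map_eq_map_cond hT0 hT hlaw (measurableSet_singleton 1).compl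
    _ ≤ ENNReal.ofReal r / (ENNReal.ofReal (1 - eps) * ENNReal.ofReal (1 - r)) :=
        ENNReal.div_le_div hTne.le hcond
    _ = ENNReal.ofReal (r / ((1 - eps) * (1 - r))) := by
        rw [← ENNReal.ofReal_mul (by linarith),
          ENNReal.ofReal_div_of_pos (mul_pos (by linarith) (by linarith))]

theorem tendsto_measure_of_tendsto_measure_symmDiff {ι : Type*} {l : Filter ι}
    {s : ι → Set Ω} {t : Set Ω} (ht : μ t ≠ ∞)
    (h : Tendsto (fun i => μ (s i ∆ t)) l (𝓝 0)) : Tendsto (fun i => μ (s i)) l (𝓝 (μ t)) := by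
  have hlower : Tendsto (fun i => μ t - μ (s i ∆ t)) l (𝓝 (μ t)) := by
    simpa using ENNReal.Tendsto.sub tendsto_const_nhds h (Or.inl ht)
  have hupper : Tendsto (fun i => μ t + μ (s i ∆ t)) l (𝓝 (μ t)) := by
    simpa using tendsto_const_nhds.add h
  refine tendsto_of_tendsto_of_tendsto_of_le_of_le hlower hupper (fun i => ?_) (fun i => ?_)
  · rw [tsub_le_iff_right, symmDiff_comm]
    exact tsub_le_iff_left.mp le_measure_symmDiff
  · exact tsub_le_iff_left.mp le_measure_symmDiff

theorem tendsto_measure_le_add_of_tendsto_measure_ne_one [IsFiniteMeasure μ] {ι : Type*}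
    {l : Filter ι} {X : ι → Ω → ℕ} {S : Ω → ℕ} (m : ℕ)
    (h : Tendsto (fun i => μ {ω | X i ω ≠ 1}) l (𝓝 0)) :
    Tendsto (fun i => μ {ω | m ≤ X i ω + S ω}) l (𝓝 (μ {ω | m - 1 ≤ S ω})) := by
  refine tendsto_measure_of_tendsto_measure_symmDiff (measure_ne_top _ _) ?_
  refine tendsto_of_tendsto_of_tendsto_of_le_of_le tendsto_const_nhds h (fun _ => zero_le)
    fun i => measure_mono fun ω hω => ?_
  intro hX
  simp only [Set.mem_symmDiff, Set.mem_ofPred_eq, hX] at hω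
  omega

theorem tendsto_ofReal_div_mul_one_sub {ι : Type*} {l : Filter ι} {r : ι → ℝ} {c : ℝ}
    (hc : c ≠ 0) (hr : Tendsto r l (𝓝 0)) :
    Tendsto (fun i => ENNReal.ofReal (r i / (c * (1 - r i)))) l (𝓝 0) := by
  have hq : Tendsto (fun i => r i / (c * (1 - r i))) l (𝓝 (0 / (c * (1 - 0)))) :=
    hr.div (tendsto_const_nhds.mul (tendsto_const_nhds.sub hr)) (by simpa using hc)
  simpa [comp_def] using (ENNReal.continuous_ofReal.tendsto _).comp hq

end

theorem limiting_peak_age_violation_general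
    {Ω : Type*} [MeasurableSpace Ω] (P : Measure Ω) [IsProbabilityMeasure P]
    (eps : ℝ) (heps : eps ∈ Set.Ioo (0 : ℝ) 1)
    (n : ℕ) (hn : 0 < n)
    (J T T0 : ℝ → Ω → ℕ) (S : Ω → ℕ) (H : Ω → ℕ)
    (hTmeas : ∀ lam ∈ Set.Ioo (0 : ℝ) 1, Measurable (T lam))
    (hT0meas : ∀ lam ∈ Set.Ioo (0 : ℝ) 1, Measurable (T0 lam))
    (hSmeas : Measurable S) (hHmeas : Measurable H)
    (hJgeom : ∀ lam ∈ Set.Ioo (0 : ℝ) 1, ∀ k : ℕ, 1 ≤ k →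
      P {ω | J lam ω = k} = ENNReal.ofReal (eps ^ (k - 1) * (1 - eps)))
    (hTgeom : ∀ lam ∈ Set.Ioo (0 : ℝ) 1, ∀ k : ℕ, 1 ≤ k →
      P {ω | T lam ω = k}
        = ENNReal.ofReal (((1 - lam) ^ n) ^ (k - 1) * (1 - (1 - lam) ^ n)))
    (hJT : ∀ lam ∈ Set.Ioo (0 : ℝ) 1, IndepFun (J lam) (T lam) P)
    (hT0law : ∀ lam ∈ Set.Ioo (0 : ℝ) 1,
      Measure.map (T0 lam) P
        = Measure.map (T lam) (P[|{ω | J lam ω ≤ T lam ω}]))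
    (hSgeom : ∀ k : ℕ, 1 ≤ k →
      P {ω | S ω = k} = ENNReal.ofReal (eps ^ (k - 1) * (1 - eps)))
    (hHgeom : ∀ k : ℕ, 1 ≤ k →
      P {ω | H ω = k} = ENNReal.ofReal (eps ^ (k - 1) * (1 - eps)))
    (A : ℝ → Ω → ℕ) (hA : ∀ lam ω, A lam ω = T0 lam ω + S ω) :
    ∀ m : ℕ, 2 ≤ m →
      P {ω | m - 1 ≤ H ω} = ENNReal.ofReal (eps ^ (m - 2))
      ∧ Tendsto (fun lam => P {ω | m ≤ A lam ω})
          (nhdsWithin 1 (Set.Ioo (0 : ℝ) 1))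
          (nhds (P {ω | m - 1 ≤ H ω})) := by
  obtain ⟨he0, he1⟩ := heps
  intro m hm
  obtain ⟨i, rfl⟩ : ∃ i, m = i + 2 := ⟨m - 2, by omega⟩
  have hHtail := measure_le_eq_ofReal_pow_of_geometric he0.le he1 hHmeas hHgeom (i := i)
  have hStail := measure_le_eq_ofReal_pow_of_geometric he0.le he1 hSmeas hSgeom (i := i)
  rw [show i + 2 - 1 = i + 1 by omega, Nat.add_sub_cancel]
  refine ⟨hHtail, ?_⟩
  simp_rw [hHtail, ← hStail, hA]
  refine tendsto_measure_le_add_of_tendsto_measure_ne_one _ ?_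
  set r : ℝ → ℝ := fun lam => (1 - lam) ^ n
  have hr : Tendsto r (𝓝[Set.Ioo 0 1] 1) (𝓝 0) := by
    have : Tendsto r (𝓝 1) (𝓝 ((1 - 1) ^ n)) :=
      ((continuous_const.sub continuous_id).pow n).tendsto 1
    simpa [zero_pow hn.ne'] using this.mono_left nhdsWithin_le_nhds
  refine tendsto_of_tendsto_of_tendsto_of_le_of_le' tendsto_const_nhds
    (tendsto_ofReal_div_mul_one_sub (sub_ne_zero.mpr he1.ne') hr)
    (Eventually.of_forall fun _ => zero_le) ?_
  filter_upwards [self_mem_nhdsWithin] with lam hlam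
  have hr1 : r lam < 1 := pow_lt_one₀ (by linarith [hlam.2]) (by linarith [hlam.1]) hn.ne'
  exact measure_ne_one_le_of_map_eq_map_cond he1 hr1 (hTmeas lam hlam) (hT0meas lam hlam)
    (by simpa using hJgeom lam hlam 1 le_rfl) (by simpa using hTgeom lam hlam 1 le_rfl)
    (hJT lam hlam) (hT0law lam hlam)

/-- **Limiting peak-age violation probability (equation (17)).**
For each arrival rate `λ ∈ (0,1)`: `J_λ ~ Geom(1−ε̄)` and `T_λ ~ Geom(1−(1−λ)^n)` are
independent, `T⁽⁰⁾_λ` (here `T0 lam`) is distributed as `T_λ` conditioned on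
`{J_λ ≤ T_λ}`, and `S ~ Geom(1−ε̄)` is independent of `T⁽⁰⁾_λ`.  With
`A_λ = T⁽⁰⁾_λ + S`, for every integer `m ≥ 2`,
`lim_{λ → 1⁻} P(A_λ ≥ m) = P(H ≥ m−1) = ε̄^{m−2}`, where `H ~ Geom(1−ε̄)`. -/
theorem limiting_peak_age_violation
    {Ω : Type*} [MeasurableSpace Ω] (P : Measure Ω) [IsProbabilityMeasure P]
    (eps : ℝ) (heps : eps ∈ Set.Ioo (0 : ℝ) 1)
    (n : ℕ) (hn : 0 < n)
    (J T T0 : ℝ → Ω → ℕ) (S : Ω → ℕ) (H : Ω → ℕ)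
    (hJmeas : ∀ lam ∈ Set.Ioo (0 : ℝ) 1, Measurable (J lam))
    (hTmeas : ∀ lam ∈ Set.Ioo (0 : ℝ) 1, Measurable (T lam))
    (hT0meas : ∀ lam ∈ Set.Ioo (0 : ℝ) 1, Measurable (T0 lam))
    (hSmeas : Measurable S) (hHmeas : Measurable H)
    (hJgeom : ∀ lam ∈ Set.Ioo (0 : ℝ) 1, ∀ k : ℕ, 1 ≤ k →
      P {ω | J lam ω = k} = ENNReal.ofReal (eps ^ (k - 1) * (1 - eps)))
    (hTgeom : ∀ lam ∈ Set.Ioo (0 : ℝ) 1, ∀ k : ℕ, 1 ≤ k →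
      P {ω | T lam ω = k}
        = ENNReal.ofReal (((1 - lam) ^ n) ^ (k - 1) * (1 - (1 - lam) ^ n)))
    (hJT : ∀ lam ∈ Set.Ioo (0 : ℝ) 1, IndepFun (J lam) (T lam) P)
    (hT0law : ∀ lam ∈ Set.Ioo (0 : ℝ) 1,
      Measure.map (T0 lam) P
        = Measure.map (T lam) (P[|{ω | J lam ω ≤ T lam ω}]))
    (hSgeom : ∀ k : ℕ, 1 ≤ k →
      P {ω | S ω = k} = ENNReal.ofReal (eps ^ (k - 1) * (1 - eps)))
    (hT0S : ∀ lam ∈ Set.Ioo (0 : ℝ) 1, IndepFun (T0 lam) S P)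
    (hHgeom : ∀ k : ℕ, 1 ≤ k →
      P {ω | H ω = k} = ENNReal.ofReal (eps ^ (k - 1) * (1 - eps)))
    (A : ℝ → Ω → ℕ) (hA : ∀ lam ω, A lam ω = T0 lam ω + S ω) :
    ∀ m : ℕ, 2 ≤ m →
      P {ω | m - 1 ≤ H ω} = ENNReal.ofReal (eps ^ (m - 2))
      ∧ Tendsto (fun lam => P {ω | m ≤ A lam ω})
          (nhdsWithin 1 (Set.Ioo (0 : ℝ) 1))
          (nhds (P {ω | m - 1 ≤ H ω})) :=
  limiting_peak_age_violation_general P eps heps n hn J T T0 S H hTmeas hT0meas hSmeas hHmeas hJgeom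
    hTgeom hJT hT0law hSgeom hHgeom A hA
end
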